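/- Let η = diag(−1,1,1,1), let Λ be a real 4×4 matrix with Λᵀ·η·Λ = η (a Lorentz transformation, hence invertible), let a ∈ ℝ⁴, ε ∈ ℝ, and let p : ℝ → ℝ be continuously differentiable. Suppose ρ̄ : ℝ⁴ → ℝ is continuously differentiable and ū : ℝ⁴ → ℝ⁴ is twice continuously differentiable and they satisfy the RAV Euler equations: for all x̄ ∈ ℝ⁴ and all μ, Σ_ν ∂_ν T̄^{μν}(x̄) = ε·□ū^μ(x̄), where T̄^{μν} = (p(ρ̄) + ρ̄)·ū^μ·ū^ν + p(ρ̄)·η^{μν} and □g = −∂₀∂₀g + ∂₁∂₁g + ∂₂∂₂g + ∂₃∂₃g componentwise. Define ρ(x) = ρ̄(Λ⁻¹(x − a)) and u(x) = Λ·ū(Λ⁻¹(x − a)). Then (ρ, u) also satisfies the RAV Euler equations: for all x ∈ ℝ⁴ and all μ, Σ_ν ∂_ν T^{μν}(x) = ε·□u^μ(x), where T^{μν} = (p(ρ) + ρ)·u^μ·u^ν + p(ρ)·η^{μν}. -/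

import Mathlib

open Matrix

/-- Partial derivative in the `i`-th coordinate of a real-valued function on `ℝ⁴`. -/
noncomputable def pd (i : Fin 4) (f : (Fin 4 → ℝ) → ℝ) (x : Fin 4 → ℝ) : ℝ :=
  deriv (fun s : ℝ => f (Function.update x i s)) (x i)

/-- The D'Alembert (wave) operator `□g = −∂₀∂₀g + ∂₁∂₁g + ∂₂∂₂g + ∂₃∂₃g`. -/
noncomputable def waveOp (f : (Fin 4 → ℝ) → ℝ) (x : Fin 4 → ℝ) : ℝ :=
  -(pd 0 (pd 0 f) x) + pd 1 (pd 1 f) x + pd 2 (pd 2 f) x + pd 3 (pd 3 f) x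

/-- The Minkowski metric `η = diag(−1,1,1,1)`. -/
noncomputable def eta : Matrix (Fin 4) (Fin 4) ℝ := Matrix.diagonal ![-1, 1, 1, 1]

/-- The perfect-fluid energy–momentum tensor `T^{μν} = (p(ρ)+ρ)u^μu^ν + p(ρ)η^{μν}`
(note `η⁻¹ = η` for `η = diag(−1,1,1,1)`). -/
noncomputable def Tpf (p : ℝ → ℝ) (ρ : (Fin 4 → ℝ) → ℝ) (u : (Fin 4 → ℝ) → Fin 4 → ℝ)
    (x : Fin 4 → ℝ) (μ ν : Fin 4) : ℝ :=
  (p (ρ x) + ρ x) * u x μ * u x ν + p (ρ x) * eta μ ν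

/-- The RAV Euler equations `∂_ν T^{μν} = ε □u^μ`. -/
def RAVEuler (p : ℝ → ℝ) (ε : ℝ) (ρ : (Fin 4 → ℝ) → ℝ)
    (u : (Fin 4 → ℝ) → Fin 4 → ℝ) : Prop :=
  ∀ (x : Fin 4 → ℝ) (μ : Fin 4),
    ∑ ν : Fin 4, pd ν (fun y => Tpf p ρ u y μ ν) x = ε * waveOp (fun y => u y μ) x


/-!
Write `A y = Λ⁻¹ (y - a)`. Pointwise, the transformed fields have energy–momentum tensor
`T^{μν}(y) = Λ^μ_α Λ^ν_β T̄^{αβ}(A y)`, because `Λ η Λᵀ = η`. By the chain rule each `∂_ν`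
produces a factor `(Λ⁻¹)^γ_ν`, which cancels against `Λ^ν_β`, so
`∂_ν T^{μν}(x) = Λ^μ_α ∂_β T̄^{αβ}(A x)`; and the D'Alembertian, being the contraction of the
Hessian with `η`, satisfies `□(g ∘ A) = (□g) ∘ A` because `Λ⁻¹ η Λ⁻ᵀ = η`. Hence both sides
of the equations for `(ρ, u)` at `x` are `Λ` applied to those for `(ρ̄, ū)` at `A x`.
-/

section LorentzMatrix

variable {n R : Type*} [Fintype n] [CommRing R]

lemma Matrix.mul_mul_transpose_apply (N M : Matrix n n R) (i j : n) :
    (N * M * Nᵀ) i j = ∑ k, ∑ l, N i k * M k l * N j l := by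
  simp only [Matrix.mul_apply, Matrix.transpose_apply, Finset.sum_mul]
  exact Finset.sum_comm

variable [DecidableEq n] {G Λ : Matrix n n R}

lemma mul_transpose_mul_mul_eq_one (hG : G * G = 1) (hΛ : Λᵀ * G * Λ = G) :
    G * Λᵀ * G * Λ = 1 := by
  rw [show G * Λᵀ * G * Λ = G * (Λᵀ * G * Λ) by simp only [Matrix.mul_assoc], hΛ, hG]

lemma inv_eq_of_transpose_mul_mul_eq (hG : G * G = 1) (hΛ : Λᵀ * G * Λ = G) :
    Λ⁻¹ = G * Λᵀ * G :=
  Matrix.inv_eq_left_inv (mul_transpose_mul_mul_eq_one hG hΛ)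

lemma inv_mul_eq_one_of_transpose_mul_mul_eq (hG : G * G = 1) (hΛ : Λᵀ * G * Λ = G) :
    Λ⁻¹ * Λ = 1 := by
  rw [inv_eq_of_transpose_mul_mul_eq hG hΛ]
  exact mul_transpose_mul_mul_eq_one hG hΛ

lemma mul_mul_transpose_eq_of_transpose_mul_mul_eq (hG : G * G = 1) (hΛ : Λᵀ * G * Λ = G) :
    Λ * G * Λᵀ = G := by
  have h : Λ * (G * Λᵀ * G) = 1 := by
    rw [← inv_eq_of_transpose_mul_mul_eq hG hΛ]
    exact mul_eq_one_comm.mp (inv_mul_eq_one_of_transpose_mul_mul_eq hG hΛ)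
  calc Λ * G * Λᵀ = Λ * (G * Λᵀ * G) * G := by simp only [Matrix.mul_assoc, hG, Matrix.mul_one]
    _ = G := by rw [h, Matrix.one_mul]

lemma inv_mul_mul_transpose_inv_eq (hG : G * G = 1) (hGt : Gᵀ = G) (hΛ : Λᵀ * G * Λ = G) :
    Λ⁻¹ * G * Λ⁻¹ᵀ = G := by
  rw [inv_eq_of_transpose_mul_mul_eq hG hΛ]
  simp only [Matrix.transpose_mul, hGt, Matrix.transpose_transpose]
  calc G * Λᵀ * G * G * (G * (Λ * G)) = G * (Λᵀ * G * Λ) * G := by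
        simp only [Matrix.mul_assoc, hG, Matrix.one_mul]
    _ = G := by rw [hΛ, hG, Matrix.one_mul]

end LorentzMatrix

lemma eta_mul_eta : eta * eta = 1 := by
  rw [eta, Matrix.diagonal_mul_diagonal, ← Matrix.diagonal_one]
  congr 1
  ext i
  fin_cases i <;> norm_num

lemma eta_transpose : etaᵀ = eta := Matrix.diagonal_transpose _

lemma HasFDerivAt.hasDerivAt_update {ι E : Type*} [Fintype ι] [DecidableEq ι]
    [NormedAddCommGroup E] [NormedSpace ℝ E] {f : (ι → ℝ) → E} {f' : (ι → ℝ) →L[ℝ] E}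
    {x : ι → ℝ} (hf : HasFDerivAt f f' x) (i : ι) :
    HasDerivAt (fun s => f (Function.update x i s)) (f' (Pi.single i 1)) (x i) := by
  rw [← Function.update_eq_self i x] at hf
  exact hf.comp_hasDerivAt _ (_root_.hasDerivAt_update x i (x i))

section PartialDerivative

variable {f : (Fin 4 → ℝ) → ℝ} {x : Fin 4 → ℝ}

lemma pd_eq_fderiv (hf : DifferentiableAt ℝ f x) (i : Fin 4) :
    pd i f x = fderiv ℝ f x (Pi.single i 1) :=
  (hf.hasFDerivAt.hasDerivAt_update i).deriv

lemma fderiv_apply_eq_sum_pd (hf : DifferentiableAt ℝ f x) (v : Fin 4 → ℝ) :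
    fderiv ℝ f x v = ∑ γ, v γ * pd γ f x := by
  conv_lhs => rw [pi_eq_sum_univ' v]
  simp [pd_eq_fderiv hf]

lemma pd_sum_mul {ι : Type*} [Fintype ι] (c : ι → ℝ) {g : ι → (Fin 4 → ℝ) → ℝ}
    (hg : ∀ α, DifferentiableAt ℝ (g α) x) (i : Fin 4) :
    pd i (fun y => ∑ α, c α * g α y) x = ∑ α, c α * pd i (g α) x := by
  rw [pd, (HasDerivAt.fun_sum fun α _ =>
    ((hg α).hasFDerivAt.hasDerivAt_update i).const_mul (c α)).deriv]
  simp [pd_eq_fderiv (hg _)]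

lemma contDiff_pd {n : ℕ} (hf : ContDiff ℝ (n + 1) f) (i : Fin 4) : ContDiff ℝ n (pd i f) := by
  have h : pd i f = fun x => fderiv ℝ f x (Pi.single i 1) :=
    funext fun x => pd_eq_fderiv (hf.differentiable (by simp) x) i
  rw [h]
  exact (hf.fderiv_right le_rfl).clm_apply contDiff_const

end PartialDerivative

lemma hasFDerivAt_mulVec_sub {m n : Type*} [Fintype m] [Fintype n] (B : Matrix m n ℝ)
    (a x : n → ℝ) :
    HasFDerivAt (fun y => B *ᵥ (y - a)) (Matrix.mulVecLin B).toContinuousLinearMap x := by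
  simpa [Matrix.mulVec_sub] using
    (Matrix.mulVecLin B).toContinuousLinearMap.hasFDerivAt.sub_const (B *ᵥ a)

lemma pd_comp_mulVec_sub (B : Matrix (Fin 4) (Fin 4) ℝ) (a : Fin 4 → ℝ) {f : (Fin 4 → ℝ) → ℝ}
    {x : Fin 4 → ℝ} (hf : DifferentiableAt ℝ f (B *ᵥ (x - a))) (ν : Fin 4) :
    pd ν (fun y => f (B *ᵥ (y - a))) x = ∑ γ, B γ ν * pd γ f (B *ᵥ (x - a)) := by
  have hcomp : HasFDerivAt (fun y => f (B *ᵥ (y - a))) _ x :=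
    hf.hasFDerivAt.comp x (hasFDerivAt_mulVec_sub B a x)
  rw [pd_eq_fderiv hcomp.differentiableAt, hcomp.fderiv]
  simp [fderiv_apply_eq_sum_pd hf]

noncomputable def jacobian (V : Fin 4 → (Fin 4 → ℝ) → ℝ) (x : Fin 4 → ℝ) :
    Matrix (Fin 4) (Fin 4) ℝ :=
  Matrix.of fun β γ => pd γ (V β) x

noncomputable def hessian (f : (Fin 4 → ℝ) → ℝ) (x : Fin 4 → ℝ) : Matrix (Fin 4) (Fin 4) ℝ :=
  jacobian (fun γ => pd γ f) x

lemma trace_jacobian (V : Fin 4 → (Fin 4 → ℝ) → ℝ) (x : Fin 4 → ℝ) :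
    (jacobian V x).trace = ∑ β, pd β (V β) x :=
  rfl

lemma waveOp_eq_trace (f : (Fin 4 → ℝ) → ℝ) (x : Fin 4 → ℝ) :
    waveOp f x = (eta * hessian f x).trace := by
  simp [waveOp, Matrix.trace, Fin.sum_univ_four, eta, hessian, jacobian]

lemma jacobian_sum_mul_comp_mulVec_sub (M B : Matrix (Fin 4) (Fin 4) ℝ) (a : Fin 4 → ℝ)
    {V : Fin 4 → (Fin 4 → ℝ) → ℝ} {x : Fin 4 → ℝ}
    (hV : ∀ β, DifferentiableAt ℝ (V β) (B *ᵥ (x - a))) :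
    jacobian (fun ν y => ∑ β, M ν β * V β (B *ᵥ (y - a))) x
      = M * jacobian V (B *ᵥ (x - a)) * B := by
  ext ν γ
  have hVA : ∀ β, DifferentiableAt ℝ (fun y => V β (B *ᵥ (y - a))) x := fun β =>
    (hV β).comp x (hasFDerivAt_mulVec_sub B a x).differentiableAt
  simp only [jacobian, Matrix.of_apply, pd_sum_mul _ hVA, pd_comp_mulVec_sub B a (hV _),
    Matrix.mul_apply, Finset.mul_sum, Finset.sum_mul]
  rw [Finset.sum_comm]
  exact Finset.sum_congr rfl fun _ _ => Finset.sum_congr rfl fun _ _ => by ring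

lemma sum_pd_sum_mul_comp_mulVec_sub {Λ B : Matrix (Fin 4) (Fin 4) ℝ} (hBΛ : B * Λ = 1)
    (a : Fin 4 → ℝ) {V : Fin 4 → (Fin 4 → ℝ) → ℝ} {x : Fin 4 → ℝ}
    (hV : ∀ β, DifferentiableAt ℝ (V β) (B *ᵥ (x - a))) :
    ∑ ν, pd ν (fun y => ∑ β, Λ ν β * V β (B *ᵥ (y - a))) x = ∑ β, pd β (V β) (B *ᵥ (x - a)) := by
  rw [← trace_jacobian, jacobian_sum_mul_comp_mulVec_sub Λ B a hV, Matrix.trace_mul_cycle, hBΛ,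
    Matrix.one_mul, trace_jacobian]

lemma waveOp_comp_mulVec_sub {B : Matrix (Fin 4) (Fin 4) ℝ} (hB : B * eta * Bᵀ = eta)
    (a : Fin 4 → ℝ) {f : (Fin 4 → ℝ) → ℝ} (hf : ContDiff ℝ 2 f) (x : Fin 4 → ℝ) :
    waveOp (fun y => f (B *ᵥ (y - a))) x = waveOp f (B *ᵥ (x - a)) := by
  have hpd : (fun ν => pd ν (fun y => f (B *ᵥ (y - a))))
      = fun ν y => ∑ γ, Bᵀ ν γ * pd γ f (B *ᵥ (y - a)) :=
    funext fun ν => funext fun y => pd_comp_mulVec_sub B a (hf.differentiable (by norm_num) _) ν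
  have hhess : hessian (fun y => f (B *ᵥ (y - a))) x = Bᵀ * hessian f (B *ᵥ (x - a)) * B := by
    rw [hessian, hpd, jacobian_sum_mul_comp_mulVec_sub _ _ _ fun γ =>
      (contDiff_pd hf γ).differentiable one_ne_zero _, hessian]
  rw [waveOp_eq_trace, waveOp_eq_trace, hhess, ← Matrix.mul_assoc, ← Matrix.mul_assoc,
    Matrix.trace_mul_cycle, ← Matrix.mul_assoc, hB]

lemma hessian_sum_mul {ι : Type*} [Fintype ι] (c : ι → ℝ) {g : ι → (Fin 4 → ℝ) → ℝ}
    (hg : ∀ α, ContDiff ℝ 2 (g α)) (x : Fin 4 → ℝ) :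
    hessian (fun y => ∑ α, c α * g α y) x = ∑ α, c α • hessian (g α) x := by
  have hpd : ∀ γ, pd γ (fun y => ∑ α, c α * g α y) = fun y => ∑ α, c α * pd γ (g α) y :=
    fun γ => funext fun y => pd_sum_mul c (fun α => (hg α).differentiable (by norm_num) y) γ
  ext γ δ
  simp only [hessian, jacobian, Matrix.of_apply, hpd, Matrix.sum_apply, Matrix.smul_apply,
    smul_eq_mul, pd_sum_mul c (fun α => (contDiff_pd (hg α) γ).differentiable one_ne_zero x)]

lemma waveOp_sum_mul {ι : Type*} [Fintype ι] (c : ι → ℝ) {g : ι → (Fin 4 → ℝ) → ℝ}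
    (hg : ∀ α, ContDiff ℝ 2 (g α)) (x : Fin 4 → ℝ) :
    waveOp (fun y => ∑ α, c α * g α y) x = ∑ α, c α * waveOp (g α) x := by
  simp only [waveOp_eq_trace, hessian_sum_mul c hg, Matrix.mul_sum, Matrix.trace_sum,
    Matrix.mul_smul, Matrix.trace_smul, smul_eq_mul]

lemma Tpf_mulVec {Λ : Matrix (Fin 4) (Fin 4) ℝ} (hΛ : Λ * eta * Λᵀ = eta) (p : ℝ → ℝ)
    (ρ : (Fin 4 → ℝ) → ℝ) (u : (Fin 4 → ℝ) → Fin 4 → ℝ) (y : Fin 4 → ℝ) (μ ν : Fin 4) :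
    Tpf p ρ (fun z => Λ *ᵥ u z) y μ ν = ∑ α, Λ μ α * ∑ β, Λ ν β * Tpf p ρ u y α β := by
  have heta := congr_fun₂ hΛ μ ν
  rw [Matrix.mul_mul_transpose_apply] at heta
  simp only [Tpf, Matrix.mulVec, dotProduct]
  rw [← heta, mul_assoc (p (ρ y) + ρ y), Finset.sum_mul_sum, Finset.mul_sum, Finset.mul_sum,
    ← Finset.sum_add_distrib]
  refine Finset.sum_congr rfl fun α _ => ?_
  rw [Finset.mul_sum, Finset.mul_sum, ← Finset.sum_add_distrib, Finset.mul_sum]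
  exact Finset.sum_congr rfl fun β _ => by ring

lemma contDiff_Tpf {n : WithTop ℕ∞} {p : ℝ → ℝ} {ρ : (Fin 4 → ℝ) → ℝ}
    {u : (Fin 4 → ℝ) → Fin 4 → ℝ} (hp : ContDiff ℝ n p) (hρ : ContDiff ℝ n ρ)
    (hu : ContDiff ℝ n u) (μ ν : Fin 4) : ContDiff ℝ n (fun y => Tpf p ρ u y μ ν) := by
  have hpρ := hp.comp hρ
  exact (((hpρ.add hρ).mul (contDiff_pi.mp hu μ)).mul (contDiff_pi.mp hu ν)).add
    (hpρ.mul contDiff_const)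

lemma sum_pd_lorentz_tensor {Λ B : Matrix (Fin 4) (Fin 4) ℝ} (hBΛ : B * Λ = 1)
    (a : Fin 4 → ℝ) {T : Fin 4 → Fin 4 → (Fin 4 → ℝ) → ℝ} {x : Fin 4 → ℝ}
    (hT : ∀ α β, DifferentiableAt ℝ (T α β) (B *ᵥ (x - a))) (μ : Fin 4) :
    ∑ ν, pd ν (fun y => ∑ α, Λ μ α * ∑ β, Λ ν β * T α β (B *ᵥ (y - a))) x
      = ∑ α, Λ μ α * ∑ β, pd β (T α β) (B *ᵥ (x - a)) := by
  have hrow : ∀ α ν, DifferentiableAt ℝ (fun y => ∑ β, Λ ν β * T α β (B *ᵥ (y - a))) x :=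
    fun α ν => DifferentiableAt.fun_sum fun β _ =>
      ((hT α β).comp x (hasFDerivAt_mulVec_sub B a x).differentiableAt).const_mul (Λ ν β)
  simp only [pd_sum_mul _ fun α => hrow α _]
  rw [Finset.sum_comm]
  simp only [← Finset.mul_sum, sum_pd_sum_mul_comp_mulVec_sub hBΛ a fun β => hT _ β]

/-- Lorentz invariance of the RAV Euler equations: if `(ρ̄, ū)` solves the RAV Euler
equations, then so does the Lorentz-transformed pair
`ρ(x) = ρ̄(Λ⁻¹(x−a))`, `u(x) = Λ·ū(Λ⁻¹(x−a))`. -/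
theorem RAVEuler_lorentz_invariant (Λ : Matrix (Fin 4) (Fin 4) ℝ)
    (hΛ : Λᵀ * eta * Λ = eta) (a : Fin 4 → ℝ) (ε : ℝ)
    (p : ℝ → ℝ) (hp : ContDiff ℝ 1 p)
    (ρb : (Fin 4 → ℝ) → ℝ) (hρb : ContDiff ℝ 1 ρb)
    (ub : (Fin 4 → ℝ) → Fin 4 → ℝ) (hub : ContDiff ℝ 2 ub)
    (hsol : RAVEuler p ε ρb ub) :
    RAVEuler p ε (fun x => ρb (Λ⁻¹.mulVec (x - a)))
      (fun x => Λ.mulVec (ub (Λ⁻¹.mulVec (x - a)))) := by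
  intro x μ
  have hT : ∀ α β, Differentiable ℝ (fun z => Tpf p ρb ub z α β) := fun α β =>
    (contDiff_Tpf hp hρb (hub.of_le (by norm_num)) α β).differentiable one_ne_zero
  have hu : ∀ α, ContDiff ℝ 2 (fun z => ub z α) := contDiff_pi.mp hub
  calc _ = ∑ ν, pd ν (fun y => ∑ α, Λ μ α * ∑ β, Λ ν β *
          Tpf p ρb ub (Λ⁻¹ *ᵥ (y - a)) α β) x := by
        simp only [← Tpf_mulVec (mul_mul_transpose_eq_of_transpose_mul_mul_eq eta_mul_eta hΛ)]
        rfl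
    _ = ∑ α, Λ μ α * (ε * waveOp (fun z => ub z α) (Λ⁻¹ *ᵥ (x - a))) := by
        rw [sum_pd_lorentz_tensor (inv_mul_eq_one_of_transpose_mul_mul_eq eta_mul_eta hΛ) a
          fun α β => hT α β _]
        exact Finset.sum_congr rfl fun α _ => by rw [hsol (Λ⁻¹ *ᵥ (x - a)) α]
    _ = ε * waveOp (fun z => ∑ α, Λ μ α * ub z α) (Λ⁻¹ *ᵥ (x - a)) := by
        rw [waveOp_sum_mul _ hu, Finset.mul_sum]
        exact Finset.sum_congr rfl fun _ _ => by ring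
    _ = _ := by
        rw [← waveOp_comp_mulVec_sub
          (inv_mul_mul_transpose_inv_eq eta_mul_eta eta_transpose hΛ) a
          (ContDiff.sum fun α _ => contDiff_const.mul (hu α))]
        rfl
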